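/- arXiv:2505.14041 — 2 statements merged into one kernel-verified Lean document; each statement's English description precedes it below -/
import Mathlib

section
/- Let K ⊆ ℝ^d be a closed set. The following are equivalent: (1) for every real multi-sequence (c_α)_{α∈ℕ^d} there exists a signed Radon measure μ on ℝ^d with all polynomial moments finite (i.e. ∫(1+|x|)^n d|μ|(x) < ∞ for every n ∈ ℕ) and with supp μ ⊆ K such that ∫ x^α dμ(x) = c_α for all α ∈ ℕ^d; (2) K is Zariski dense (every real polynomial in d variables vanishing identically on K is the zero polynomial) and for every n ∈ ℕ the real vector space N_n(K) = { P ∈ ℝ[x_1,…,x_d] : sup_{x∈K} |P(x)|/(1+|x|)^n < ∞ } is finite-dimensional. -/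
open MeasureTheory

noncomputable section

/-- First-order partial derivative in the `i`-th coordinate direction. -/
noncomputable def pderivI {d : ℕ} (i : Fin d) (f : EuclideanSpace ℝ (Fin d) → ℝ) :
    EuclideanSpace ℝ (Fin d) → ℝ :=
  fun x => fderiv ℝ f x (EuclideanSpace.single i 1)

noncomputable def pderivList {d : ℕ} : List (Fin d) → (EuclideanSpace ℝ (Fin d) → ℝ) →
    EuclideanSpace ℝ (Fin d) → ℝ
  | [], f => f
  | i :: l, f => pderivList l (pderivI i f)

/-- The multi-index partial derivative `f^{(α)}`. -/
noncomputable def pderivMulti {d : ℕ} (α : Fin d → ℕ) (f : EuclideanSpace ℝ (Fin d) → ℝ) :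
    EuclideanSpace ℝ (Fin d) → ℝ :=
  pderivList ((List.finRange d).flatMap fun i => List.replicate (α i) i) f

/-- `d_K(x) = min(1, d(x, ∂K))`. -/
noncomputable def dK {d : ℕ} (K : Set (EuclideanSpace ℝ (Fin d)))
    (x : EuclideanSpace ℝ (Fin d)) : ℝ :=
  min 1 (Metric.infDist x (frontier K))

/-- `f` is a Schwartz function: smooth, and all derivatives decay faster than any
polynomial. -/
def IsSchwartz {d : ℕ} (f : EuclideanSpace ℝ (Fin d) → ℝ) : Prop :=
  ContDiff ℝ (⊤ : ℕ∞) f ∧ ∀ (α : Fin d → ℕ) (n : ℕ), ∃ C : ℝ, ∀ x,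
    |pderivMulti α f x| * (1 + ‖x‖) ^ n ≤ C

/-- The space of polynomials `P` such that `sup_{x ∈ K} |P(x)| w(x) / (1+|x|)^n < ∞`,
as a submodule of the polynomial ring. -/
noncomputable def polyGrowthSpace (d : ℕ) (K : Set (EuclideanSpace ℝ (Fin d)))
    (w : EuclideanSpace ℝ (Fin d) → ℝ) (n : ℕ) : Submodule ℝ (MvPolynomial (Fin d) ℝ) where
  carrier := {P | ∃ C : ℝ, ∀ x ∈ K,
    |MvPolynomial.eval (fun i => x i) P * w x| ≤ C * (1 + ‖x‖) ^ n}
  zero_mem' := ⟨0, fun x _ => by simp⟩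
  add_mem' := by
    rintro P Q ⟨C, hC⟩ ⟨D, hD⟩
    refine ⟨C + D, fun x hx => ?_⟩
    have h3 : MvPolynomial.eval (fun i => x i) (P + Q) * w x
        = MvPolynomial.eval (fun i => x i) P * w x
          + MvPolynomial.eval (fun i => x i) Q * w x := by
      rw [map_add, add_mul]
    rw [h3, add_mul]
    exact (abs_add_le _ _).trans (add_le_add (hC x hx) (hD x hx))
  smul_mem' := by
    rintro c P ⟨C, hC⟩
    refine ⟨|c| * C, fun x hx => ?_⟩
    have h3 : MvPolynomial.eval (fun i => x i) (c • P) * w x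
        = c * (MvPolynomial.eval (fun i => x i) P * w x) := by
      rw [MvPolynomial.smul_eq_C_mul, map_mul, MvPolynomial.eval_C, mul_assoc]
    rw [h3, abs_mul, mul_assoc]
    exact mul_le_mul_of_nonneg_left (hC x hx) (abs_nonneg c)

/-- Integral of `f` against the signed measure `μ`. -/
noncomputable def sintegral {d : ℕ} (μ : MeasureTheory.SignedMeasure (EuclideanSpace ℝ (Fin d)))
    (f : EuclideanSpace ℝ (Fin d) → ℝ) : ℝ :=
  (∫ x, f x ∂μ.toJordanDecomposition.posPart) - (∫ x, f x ∂μ.toJordanDecomposition.negPart)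

/-- A weight sequence: positive, normalized, log-convex, non-quasianalytic. -/
def IsWeightSeq (M : ℕ → ℝ) : Prop :=
  (∀ p, 0 < M p) ∧ M 0 = 1 ∧ 1 ≤ M 1 ∧
    (∀ p : ℕ, M (p + 1) ^ 2 ≤ M p * M (p + 2)) ∧
    Summable (fun p : ℕ => M p / M (p + 1))

/-- Condition (M.2), moderate growth. -/
def CondM2 (M : ℕ → ℝ) : Prop :=
  ∃ C : ℝ, 0 < C ∧ ∀ p q : ℕ, M (p + q) ≤ C ^ (p + q) * M p * M q

/-- Condition (M.3), strong non-quasianalyticity. -/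
def CondM3 (M : ℕ → ℝ) : Prop :=
  ∃ C : ℝ, 0 < C ∧ ∀ p : ℕ, 1 ≤ p →
    (∑' q : ℕ, M (p + q) / M (p + q + 1)) ≤ C * p * (M p / M (p + 1))

/-- The function `ν_M(t) = inf_{p} t^p M_p / p!`. -/
noncomputable def nuM (M : ℕ → ℝ) (t : ℝ) : ℝ :=
  ⨅ p : ℕ, t ^ p * M p / (Nat.factorial p : ℝ)

/-- Membership in the Gelfand-Shilov space `S^{M,h}(ℝ^d)`. -/
def MemGS (d : ℕ) (M : ℕ → ℝ) (h : ℝ) (f : EuclideanSpace ℝ (Fin d) → ℝ) : Prop :=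
  ContDiff ℝ (⊤ : ℕ∞) f ∧ ∀ n : ℕ, ∃ C : ℝ,
    ∀ (α : Fin d → ℕ) (x : EuclideanSpace ℝ (Fin d)),
      |pderivMulti α f x| * (1 + ‖x‖) ^ n ≤ C * h ^ (∑ i, α i) * M (∑ i, α i)

/-- Membership in the Gelfand-Shilov space `S^σ(ℝ^d)`. -/
def MemGSsigma (d : ℕ) (σ : ℝ) (f : EuclideanSpace ℝ (Fin d) → ℝ) : Prop :=
  ContDiff ℝ (⊤ : ℕ∞) f ∧ ∃ h : ℝ, 0 < h ∧ ∀ n : ℕ, ∃ C : ℝ,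
    ∀ (α : Fin d → ℕ) (x : EuclideanSpace ℝ (Fin d)),
      |pderivMulti α f x| * (1 + ‖x‖) ^ n
        ≤ C * h ^ (∑ i, α i) * (Nat.factorial (∑ i, α i) : ℝ) ^ σ

/-- The norm `‖f‖^{M,h}_n`. -/
noncomputable def gsNorm (d : ℕ) (M : ℕ → ℝ) (h : ℝ) (n : ℕ)
    (f : EuclideanSpace ℝ (Fin d) → ℝ) : ℝ :=
  ⨆ q : (Fin d → ℕ) × EuclideanSpace ℝ (Fin d),
    |pderivMulti q.1 f q.2| * (1 + ‖q.2‖) ^ n / (h ^ (∑ i, q.1 i) * M (∑ i, q.1 i))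

/-- The norm `‖f‖_{k,n} = max_{|α| ≤ k} sup_x |f^{(α)}(x)| (1+|x|)^n`. -/
noncomputable def schwartzNormKN (d k n : ℕ) (f : EuclideanSpace ℝ (Fin d) → ℝ) : ℝ :=
  ⨆ q : {α : Fin d → ℕ // ∑ i, α i ≤ k} × EuclideanSpace ℝ (Fin d),
    |pderivMulti q.1.1 f q.2| * (1 + ‖q.2‖) ^ n

/-- The weight `e^{-ε (1/t)^{1/(σ-1)}}`, with value `0` at `t = 0`. -/
noncomputable def gevreyWeight (σ ε t : ℝ) : ℝ :=
  if t = 0 then 0 else Real.exp (-(ε * (1 / t) ^ (1 / (σ - 1))))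

/-!
Necessity: if every functional `L` on `ℝ[x]` is integration against some `μ ∈ M_pol(ℝ^d)`
supported in `K`, then `L` kills the polynomials vanishing on `K`, and on `N_n(K)` it is bounded
by `∫ (1 + |x|)ⁿ d|μ|` times the growth constant of the polynomial. The first gives Zariski
density; the second finite dimension, since on an infinite-dimensional space some functional
outgrows every such bound.

Sufficiency: `L` is represented by a series `∑ ρₖ` of finitely supported measures on `K`.
Zariski density makes the moments of such measures fill the dual of each finite-dimensional
`N_{k+1}(K)`. By Hahn–Banach, a functional vanishing on `N_k(K)` is even the moment vector of
measures of arbitrarily small `(1 + |x|)ᵏ`-weighted mass, because a separating functional bounded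
on the measures of small mass is a polynomial of `N_k(K)`. Choosing `ρ_{k+1}` to fix the moments
on `N_{k+1}(K)` at `k`-mass at most `2⁻ᵏ`, the series converges in every weighted norm, to a
signed measure whose moments are given by `L`.
-/

open MvPolynomial
open scoped ENNReal

section PolyGrowth

variable {d : ℕ}

def IsZariskiDense (K : Set (EuclideanSpace ℝ (Fin d))) : Prop :=
  ∀ P : MvPolynomial (Fin d) ℝ, (∀ x ∈ K, eval (fun i => x i) P = 0) → P = 0

theorem mem_polyGrowthSpace {K : Set (EuclideanSpace ℝ (Fin d))}
    {w : EuclideanSpace ℝ (Fin d) → ℝ} {n : ℕ} {P : MvPolynomial (Fin d) ℝ} :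
    P ∈ polyGrowthSpace d K w n ↔
      ∃ C : ℝ, ∀ x ∈ K, |eval (fun i => x i) P * w x| ≤ C * (1 + ‖x‖) ^ n :=
  Iff.rfl

theorem polyGrowthSpace_mono {K : Set (EuclideanSpace ℝ (Fin d))}
    {w : EuclideanSpace ℝ (Fin d) → ℝ} {m n : ℕ} (h : m ≤ n) :
    polyGrowthSpace d K w m ≤ polyGrowthSpace d K w n := by
  rintro P ⟨C, hC⟩
  refine ⟨max C 0, fun x hx => (hC x hx).trans ?_⟩
  calc C * (1 + ‖x‖) ^ m ≤ max C 0 * (1 + ‖x‖) ^ m := by gcongr; exact le_max_left C 0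
    _ ≤ max C 0 * (1 + ‖x‖) ^ n := by
      gcongr
      exact le_add_of_nonneg_right (norm_nonneg x)

theorem abs_prod_pow_le (x : EuclideanSpace ℝ (Fin d)) (α : Fin d → ℕ) :
    |∏ i, x i ^ α i| ≤ (1 + ‖x‖) ^ ∑ i, α i := by
  rw [Finset.abs_prod, ← Finset.prod_pow_eq_pow_sum]
  gcongr with i
  rw [abs_pow]
  exact pow_le_pow_left₀ (abs_nonneg _)
    ((PiLp.norm_apply_le x i).trans (le_add_of_nonneg_left zero_le_one)) _

theorem prod_X_pow_mem_polyGrowthSpace (K : Set (EuclideanSpace ℝ (Fin d))) (α : Fin d → ℕ) :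
    (∏ i, X i ^ α i : MvPolynomial (Fin d) ℝ) ∈ polyGrowthSpace d K (fun _ => 1) (∑ i, α i) :=
  ⟨1, fun x _ => by simpa using abs_prod_pow_le x α⟩

theorem exists_mem_polyGrowthSpace (K : Set (EuclideanSpace ℝ (Fin d)))
    (P : MvPolynomial (Fin d) ℝ) : ∃ n, P ∈ polyGrowthSpace d K (fun _ => 1) n := by
  induction P using MvPolynomial.induction_on' with
  | monomial u a =>
    refine ⟨∑ i, u i, ?_⟩
    rw [monomial_eq, C_mul', Finsupp.prod_pow]
    exact Submodule.smul_mem _ a (prod_X_pow_mem_polyGrowthSpace K u)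
  | add p q hp hq =>
    obtain ⟨m, hm⟩ := hp
    obtain ⟨n, hn⟩ := hq
    exact ⟨max m n, add_mem (polyGrowthSpace_mono (le_max_left m n) hm)
      (polyGrowthSpace_mono (le_max_right m n) hn)⟩

theorem continuous_eval_euclideanSpace (P : MvPolynomial (Fin d) ℝ) :
    Continuous fun x : EuclideanSpace ℝ (Fin d) => eval (fun i => x i) P :=
  (continuous_eval P).comp (PiLp.continuous_ofLp 2 _)

theorem exists_linearMap_prod_X_pow_eq (c : (Fin d → ℕ) → ℝ) :
    ∃ L : MvPolynomial (Fin d) ℝ →ₗ[ℝ] ℝ, ∀ α, L (∏ i, X i ^ α i) = c α := by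
  refine ⟨(basisMonomials (Fin d) ℝ).constr ℝ fun β => c β, fun α => ?_⟩
  have : (∏ i, X i ^ α i : MvPolynomial (Fin d) ℝ) =
      basisMonomials (Fin d) ℝ (Finsupp.equivFunOnFinite.symm α) := by
    simp only [coe_basisMonomials, monomial_eq, C_1, one_mul, Finsupp.prod_pow,
      Finsupp.coe_equivFunOnFinite_symm]
  rw [this, Module.Basis.constr_basis]
  rfl

end PolyGrowth

section SignedIntegral

theorem posPart_le_totalVariation {α : Type*} [MeasurableSpace α] {μ : SignedMeasure α} :
    μ.toJordanDecomposition.posPart ≤ μ.totalVariation :=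
  Measure.le_add_right le_rfl

theorem negPart_le_totalVariation {α : Type*} [MeasurableSpace α] {μ : SignedMeasure α} :
    μ.toJordanDecomposition.negPart ≤ μ.totalVariation :=
  Measure.le_add_left le_rfl

variable {d : ℕ} {μ : SignedMeasure (EuclideanSpace ℝ (Fin d))}

theorem sintegral_add {f g : EuclideanSpace ℝ (Fin d) → ℝ} (hf : Integrable f μ.totalVariation)
    (hg : Integrable g μ.totalVariation) :
    sintegral μ (fun x => f x + g x) = sintegral μ f + sintegral μ g := by
  simp only [sintegral]
  rw [integral_add (hf.mono_measure posPart_le_totalVariation)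
      (hg.mono_measure posPart_le_totalVariation),
    integral_add (hf.mono_measure negPart_le_totalVariation)
      (hg.mono_measure negPart_le_totalVariation)]
  ring

theorem sintegral_const_mul (c : ℝ) (f : EuclideanSpace ℝ (Fin d) → ℝ) :
    sintegral μ (fun x => c * f x) = c * sintegral μ f := by
  simp only [sintegral, integral_const_mul, mul_sub]

theorem abs_sintegral_le {K : Set (EuclideanSpace ℝ (Fin d))} (hK : μ.totalVariation Kᶜ = 0)
    {f g : EuclideanSpace ℝ (Fin d) → ℝ} (hg : Integrable g μ.totalVariation)
    (hfg : ∀ x ∈ K, |f x| ≤ g x) :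
    |sintegral μ f| ≤ ∫ x, g x ∂μ.totalVariation := by
  have hae : ∀ᵐ x ∂μ.totalVariation, ‖f x‖ ≤ g x := (ae_iff.2 hK).mono hfg
  calc |sintegral μ f|
      ≤ ‖∫ x, f x ∂μ.toJordanDecomposition.posPart‖
        + ‖∫ x, f x ∂μ.toJordanDecomposition.negPart‖ := abs_sub _ _
    _ ≤ (∫ x, g x ∂μ.toJordanDecomposition.posPart)
        + ∫ x, g x ∂μ.toJordanDecomposition.negPart :=
      add_le_add
        (norm_integral_le_of_norm_le (hg.mono_measure posPart_le_totalVariation)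
          (ae_mono posPart_le_totalVariation hae))
        (norm_integral_le_of_norm_le (hg.mono_measure negPart_le_totalVariation)
          (ae_mono negPart_le_totalVariation hae))
    _ = ∫ x, g x ∂μ.totalVariation :=
      (integral_add_measure (hg.mono_measure posPart_le_totalVariation)
        (hg.mono_measure negPart_le_totalVariation)).symm

theorem integrable_eval (hμ : ∀ n : ℕ, Integrable (fun x => (1 + ‖x‖) ^ n) μ.totalVariation)
    (P : MvPolynomial (Fin d) ℝ) :
    Integrable (fun x => eval (fun i => x i) P) μ.totalVariation := by
  obtain ⟨n, C, hC⟩ := exists_mem_polyGrowthSpace Set.univ P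
  refine ((hμ n).const_mul C).mono' (continuous_eval_euclideanSpace P).aestronglyMeasurable
    (ae_of_all _ fun x => ?_)
  simpa using hC x (Set.mem_univ x)

theorem sintegral_eval_eq (hμ : ∀ n : ℕ, Integrable (fun x => (1 + ‖x‖) ^ n) μ.totalVariation)
    {L : MvPolynomial (Fin d) ℝ →ₗ[ℝ] ℝ}
    (h : ∀ α : Fin d → ℕ, sintegral μ (fun x => ∏ i, x i ^ α i) = L (∏ i, X i ^ α i))
    (P : MvPolynomial (Fin d) ℝ) : sintegral μ (fun x => eval (fun i => x i) P) = L P := by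
  induction P using MvPolynomial.induction_on' with
  | monomial u a =>
    rw [monomial_eq, C_mul', Finsupp.prod_pow, map_smul, smul_eq_mul, ← h, ← sintegral_const_mul]
    simp
  | add p q hp hq =>
    simp only [map_add]
    rw [sintegral_add (integrable_eval hμ p) (integrable_eval hμ q), hp, hq]

end SignedIntegral

section Necessity

variable {d : ℕ}

def IsMomentFunctionalOn (K : Set (EuclideanSpace ℝ (Fin d)))
    (L : MvPolynomial (Fin d) ℝ →ₗ[ℝ] ℝ) : Prop :=
  ∃ μ : SignedMeasure (EuclideanSpace ℝ (Fin d)),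
    (∀ n : ℕ, Integrable (fun x => (1 + ‖x‖) ^ n) μ.totalVariation) ∧
      μ.totalVariation Kᶜ = 0 ∧ ∀ P, sintegral μ (fun x => eval (fun i => x i) P) = L P

theorem FiniteDimensional.of_forall_dual_abs_le {V : Type*} [AddCommGroup V] [Module ℝ V]
    (C : V → ℝ) (h : ∀ L : Module.Dual ℝ V, ∃ M, ∀ v, |L v| ≤ M * C v) :
    FiniteDimensional ℝ V := by
  by_contra hV
  let B := Module.Basis.ofVectorSpace ℝ V
  have : Infinite (Module.Basis.ofVectorSpaceIndex ℝ V) :=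
    not_finite_iff_infinite.1 fun _ => hV (Module.Finite.of_basis B)
  let e := Infinite.natEmbedding (Module.Basis.ofVectorSpaceIndex ℝ V)
  obtain ⟨M, hM⟩ :=
    h (B.constr ℝ fun i => Function.extend e (fun k : ℕ => (k : ℝ)) 0 i * (|C (B i)| + 1))
  obtain ⟨k, hk⟩ := exists_nat_gt |M|
  have hBk := hM (B (e k))
  rw [B.constr_basis, e.injective.extend_apply] at hBk
  have hCk : 0 < |C (B (e k))| + 1 := by positivity
  have : (k : ℝ) * (|C (B (e k))| + 1) ≤ |M| * (|C (B (e k))| + 1) :=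
    calc (k : ℝ) * (|C (B (e k))| + 1) = |k * (|C (B (e k))| + 1)| :=
          (abs_of_nonneg (by positivity)).symm
      _ ≤ |M| * |C (B (e k))| := hBk.trans ((le_abs_self _).trans (abs_mul _ _).le)
      _ ≤ |M| * (|C (B (e k))| + 1) := by gcongr; linarith
  exact hk.not_ge (le_of_mul_le_mul_right this hCk)

theorem isZariskiDense_of_forall_isMomentFunctionalOn {K : Set (EuclideanSpace ℝ (Fin d))}
    (h : ∀ L, IsMomentFunctionalOn K L) : IsZariskiDense K := by
  intro P hP
  refine (Module.forall_dual_apply_eq_zero_iff ℝ P).1 fun L => ?_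
  obtain ⟨μ, -, hμK, hμL⟩ := h L
  have := abs_sintegral_le hμK (integrable_zero _ _ _) fun x hx => (abs_eq_zero.2 (hP x hx)).le
  rw [← hμL]
  simpa using this

theorem finiteDimensional_of_forall_isMomentFunctionalOn {K : Set (EuclideanSpace ℝ (Fin d))}
    (h : ∀ L, IsMomentFunctionalOn K L) (n : ℕ) :
    FiniteDimensional ℝ (polyGrowthSpace d K (fun _ => 1) n) := by
  choose C hC using fun P : polyGrowthSpace d K (fun _ => 1) n => mem_polyGrowthSpace.1 P.2
  refine FiniteDimensional.of_forall_dual_abs_le C fun L => ?_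
  obtain ⟨L', hL'⟩ := LinearMap.exists_extend L
  obtain ⟨μ, hμ, hμK, hμL⟩ := h L'
  refine ⟨∫ x, (1 + ‖x‖) ^ n ∂μ.totalVariation, fun P => ?_⟩
  have hLP : L P = sintegral μ (fun x => eval (fun i => x i) (P : MvPolynomial (Fin d) ℝ)) := by
    rw [hμL, ← hL']
    rfl
  rw [hLP, mul_comm, ← integral_const_mul]
  exact abs_sintegral_le hμK ((hμ n).const_mul _) fun x hx => by simpa using hC P x hx

end Necessity

section PosPartMeasure

variable {X : Type*} [MeasurableSpace X] [MeasurableSingletonClass X]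

def Finsupp.posPartMeasure (ρ : X →₀ ℝ) : Measure X :=
  ρ.sum fun x a => ENNReal.ofReal a • Measure.dirac x

theorem Finsupp.posPartMeasure_compl_eq_zero {K : Set X} {ρ : X →₀ ℝ}
    (hρ : ρ ∈ Finsupp.supported ℝ ℝ K) : ρ.posPartMeasure Kᶜ = 0 := by
  rw [Finsupp.posPartMeasure, Finsupp.sum, Measure.coe_finsetSum, Finset.sum_apply]
  refine Finset.sum_eq_zero fun x hx => ?_
  rw [Measure.smul_apply, Measure.dirac_apply,
    Set.indicator_of_notMem (Set.notMem_compl_iff.2 (hρ hx)), smul_zero]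

theorem Finsupp.lintegral_posPartMeasure (ρ : X →₀ ℝ) (g : X → ℝ≥0∞) :
    ∫⁻ x, g x ∂ρ.posPartMeasure = ρ.sum fun x a => ENNReal.ofReal a * g x := by
  simp only [Finsupp.posPartMeasure, Finsupp.sum, lintegral_finsetSum_measure,
    lintegral_smul_measure, lintegral_dirac, smul_eq_mul]

theorem Finsupp.integral_posPartMeasure (ρ : X →₀ ℝ) (f : X → ℝ) :
    ∫ x, f x ∂ρ.posPartMeasure = ρ.sum fun x a => max a 0 * f x := by
  rw [Finsupp.posPartMeasure, Finsupp.sum, integral_finsetSum_measure fun x _ =>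
    (integrable_dirac enorm_lt_top).smul_measure ENNReal.ofReal_ne_top]
  simp only [integral_smul_measure, integral_dirac, ENNReal.toReal_ofReal', smul_eq_mul,
    Finsupp.sum]

theorem Finsupp.integral_posPartMeasure_sub_neg (ρ : X →₀ ℝ) (f : X → ℝ) :
    ∫ x, f x ∂ρ.posPartMeasure - ∫ x, f x ∂(-ρ).posPartMeasure = ρ.sum fun x a => a * f x := by
  rw [Finsupp.integral_posPartMeasure, Finsupp.integral_posPartMeasure,
    Finsupp.sum_neg_index (by simp), ← Finsupp.sum_sub]
  simp only [← sub_mul, max_zero_sub_eq_self]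

theorem sum_posPartMeasure_compl_eq_zero {K : Set X} {ρ : ℕ → X →₀ ℝ}
    (hρK : ∀ k, ρ k ∈ Finsupp.supported ℝ ℝ K) :
    Measure.sum (fun k => (ρ k).posPartMeasure) Kᶜ = 0 := by
  simp [Measure.sum_apply_of_countable, Finsupp.posPartMeasure_compl_eq_zero (hρK _)]

end PosPartMeasure

section WeightedMass

variable {X : Type*} [SeminormedAddCommGroup X]

def weightedMass (n : ℕ) : Seminorm ℝ (X →₀ ℝ) :=
  Seminorm.of (fun ρ => ρ.sum fun x a => |a| * (1 + ‖x‖) ^ n)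
    (fun ρ σ => by
      classical
      rw [Finsupp.sum_of_support_subset _ Finsupp.support_add _ (by simp),
        Finsupp.sum_of_support_subset ρ Finset.subset_union_left _ (by simp),
        Finsupp.sum_of_support_subset σ Finset.subset_union_right _ (by simp),
        ← Finset.sum_add_distrib]
      refine Finset.sum_le_sum fun x _ => ?_
      rw [Finsupp.add_apply, ← add_mul]
      gcongr
      exact abs_add_le _ _)
    (fun c ρ => by
      rw [Finsupp.sum_smul_index (by simp), Finsupp.mul_sum]
      simp only [abs_mul, Real.norm_eq_abs, mul_assoc])

theorem weightedMass_apply (n : ℕ) (ρ : X →₀ ℝ) :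
    weightedMass n ρ = ρ.sum fun x a => |a| * (1 + ‖x‖) ^ n :=
  rfl

theorem weightedMass_single (n : ℕ) (x : X) (a : ℝ) :
    weightedMass n (Finsupp.single x a) = |a| * (1 + ‖x‖) ^ n := by
  simp [weightedMass_apply]

theorem weightedMass_mono {m n : ℕ} (h : m ≤ n) (ρ : X →₀ ℝ) :
    weightedMass m ρ ≤ weightedMass n ρ := by
  rw [weightedMass_apply, weightedMass_apply]
  refine Finset.sum_le_sum fun x _ => ?_
  exact mul_le_mul_of_nonneg_left
    (pow_le_pow_right₀ (le_add_of_nonneg_right (norm_nonneg x)) h) (abs_nonneg _)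

theorem summable_weightedMass {ρ : ℕ → X →₀ ℝ}
    (hρ : ∀ n, weightedMass n (ρ (n + 1)) ≤ (1 / 2) ^ n) (m : ℕ) :
    Summable fun k => weightedMass m (ρ k) := by
  rw [← summable_nat_add_iff (m + 1)]
  refine Summable.of_nonneg_of_le (fun k => apply_nonneg _ _) (fun k => ?_) summable_geometric_two
  calc weightedMass m (ρ (k + (m + 1))) ≤ weightedMass (k + m) (ρ (k + m + 1)) :=
        weightedMass_mono (by omega) _
    _ ≤ (1 / 2) ^ (k + m) := hρ (k + m)
    _ ≤ (1 / 2) ^ k := pow_le_pow_of_le_one (by norm_num) (by norm_num) (by omega)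

variable [MeasurableSpace X] [MeasurableSingletonClass X]

theorem Finsupp.lintegral_posPartMeasure_le_weightedMass (ρ : X →₀ ℝ) (n : ℕ) :
    ∫⁻ x, ENNReal.ofReal ((1 + ‖x‖) ^ n) ∂ρ.posPartMeasure ≤
      ENNReal.ofReal (weightedMass n ρ) := by
  rw [Finsupp.lintegral_posPartMeasure, weightedMass_apply, Finsupp.sum, Finsupp.sum,
    ENNReal.ofReal_sum_of_nonneg fun x _ => by positivity]
  refine Finset.sum_le_sum fun x _ => ?_
  rw [ENNReal.ofReal_mul (abs_nonneg _)]
  gcongr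
  exact le_abs_self _

variable [OpensMeasurableSpace X] {ρ : ℕ → X →₀ ℝ}

theorem integrable_pow_sum_posPartMeasure {n : ℕ}
    (hρ : Summable fun k => weightedMass n (ρ k)) :
    Integrable (fun x => (1 + ‖x‖) ^ n) (Measure.sum fun k => (ρ k).posPartMeasure) := by
  refine ⟨by fun_prop, (hasFiniteIntegral_iff_ofReal (ae_of_all _ fun x => by positivity)).2 ?_⟩
  rw [lintegral_sum_measure]
  calc ∑' k, ∫⁻ x, ENNReal.ofReal ((1 + ‖x‖) ^ n) ∂(ρ k).posPartMeasure
      ≤ ∑' k, ENNReal.ofReal (weightedMass n (ρ k)) :=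
        ENNReal.tsum_le_tsum fun k => (ρ k).lintegral_posPartMeasure_le_weightedMass n
    _ = ENNReal.ofReal (∑' k, weightedMass n (ρ k)) :=
        (ENNReal.ofReal_tsum_of_nonneg (fun k => apply_nonneg _ _) hρ).symm
    _ < ⊤ := ENNReal.ofReal_lt_top

theorem isFiniteMeasure_sum_posPartMeasure (hρ : Summable fun k => weightedMass 0 (ρ k)) :
    IsFiniteMeasure (Measure.sum fun k => (ρ k).posPartMeasure) :=
  (integrable_const_iff.1 (by simpa using integrable_pow_sum_posPartMeasure hρ)).resolve_left
    one_ne_zero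

theorem integrable_sum_posPartMeasure {K : Set X} (hρK : ∀ k, ρ k ∈ Finsupp.supported ℝ ℝ K)
    {n : ℕ} (hρ : Summable fun k => weightedMass n (ρ k)) {f : X → ℝ} (hf : Continuous f)
    {C : ℝ} (hfC : ∀ x ∈ K, |f x| ≤ C * (1 + ‖x‖) ^ n) :
    Integrable f (Measure.sum fun k => (ρ k).posPartMeasure) :=
  ((integrable_pow_sum_posPartMeasure hρ).const_mul C).mono' hf.aestronglyMeasurable
    ((ae_iff.2 (sum_posPartMeasure_compl_eq_zero hρK)).mono hfC)

end WeightedMass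

section Assembly

theorem totalVariation_toSignedMeasure_sub_le {α : Type*} [MeasurableSpace α] (μ ν : Measure α)
    [IsFiniteMeasure μ] [IsFiniteMeasure ν] :
    (μ.toSignedMeasure - ν.toSignedMeasure).totalVariation ≤ μ + ν := by
  rw [SignedMeasure.totalVariation, Measure.toJordanDecomposition_toSignedMeasure_sub]
  exact add_le_add Measure.sub_le Measure.sub_le

variable {d : ℕ}

theorem sintegral_toSignedMeasure_sub (μ ν : Measure (EuclideanSpace ℝ (Fin d)))
    [IsFiniteMeasure μ] [IsFiniteMeasure ν] {f : EuclideanSpace ℝ (Fin d) → ℝ}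
    (hμ : Integrable f μ) (hν : Integrable f ν) :
    sintegral (μ.toSignedMeasure - ν.toSignedMeasure) f = ∫ x, f x ∂μ - ∫ x, f x ∂ν := by
  have hJordan : μ - ν + ν = μ + (ν - μ) := by
    rw [← Measure.toSignedMeasure_eq_toSignedMeasure_iff, Measure.toSignedMeasure_add,
      Measure.toSignedMeasure_add]
    exact (sub_eq_sub_iff_add_eq_add.1
      Measure.sub_toSignedMeasure_eq_toSignedMeasure_sub).symm
  have h := integral_add_measure (hμ.mono_measure (Measure.sub_le (ν := ν))) hν
  rw [hJordan, integral_add_measure hμ (hν.mono_measure (Measure.sub_le (ν := μ)))] at h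
  simp only [sintegral, Measure.toJordanDecomposition_toSignedMeasure_sub,
    Measure.jordanDecompositionOfToSignedMeasureSub_posPart,
    Measure.jordanDecompositionOfToSignedMeasureSub_negPart]
  linarith

theorem exists_signedMeasure_hasSum {K : Set (EuclideanSpace ℝ (Fin d))}
    {ρ : ℕ → EuclideanSpace ℝ (Fin d) →₀ ℝ} (hρK : ∀ k, ρ k ∈ Finsupp.supported ℝ ℝ K)
    (hρ : ∀ n, Summable fun k => weightedMass n (ρ k)) :
    ∃ μ : SignedMeasure (EuclideanSpace ℝ (Fin d)),
      (∀ n : ℕ, Integrable (fun x => (1 + ‖x‖) ^ n) μ.totalVariation) ∧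
      μ.totalVariation Kᶜ = 0 ∧
      ∀ f, Continuous f → ∀ n C, (∀ x ∈ K, |f x| ≤ C * (1 + ‖x‖) ^ n) →
        HasSum (fun k => (ρ k).sum fun x a => a * f x) (sintegral μ f) := by
  have hρK' : ∀ k, -ρ k ∈ Finsupp.supported ℝ ℝ K := fun k => neg_mem (hρK k)
  have hρ' : ∀ n, Summable fun k => weightedMass n (-ρ k) := by simpa only [map_neg_eq_map]
  set μPos := Measure.sum fun k => (ρ k).posPartMeasure
  set μNeg := Measure.sum fun k => (-ρ k).posPartMeasure
  have := isFiniteMeasure_sum_posPartMeasure (hρ 0)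
  have := isFiniteMeasure_sum_posPartMeasure (hρ' 0)
  have hvar := totalVariation_toSignedMeasure_sub_le μPos μNeg
  refine ⟨μPos.toSignedMeasure - μNeg.toSignedMeasure, fun n => ?_, ?_, fun f hf n C hfC => ?_⟩
  · exact ((integrable_pow_sum_posPartMeasure (hρ n)).add_measure
      (integrable_pow_sum_posPartMeasure (hρ' n))).mono_measure hvar
  · refine le_antisymm ((hvar Kᶜ).trans_eq ?_) zero_le
    rw [Measure.add_apply, sum_posPartMeasure_compl_eq_zero hρK,
      sum_posPartMeasure_compl_eq_zero hρK', add_zero]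
  · have hPos := integrable_sum_posPartMeasure hρK (hρ n) hf hfC
    have hNeg := integrable_sum_posPartMeasure hρK' (hρ' n) hf hfC
    rw [sintegral_toSignedMeasure_sub _ _ hPos hNeg]
    simpa only [Finsupp.integral_posPartMeasure_sub_neg] using
      (hasSum_integral_measure hPos).sub (hasSum_integral_measure hNeg)

end Assembly

namespace Seminorm

variable {M : Type*} [AddCommGroup M] [Module ℝ M] (p : Seminorm ℝ M) (S : Submodule ℝ M)

theorem exists_mem_preimage_le_mul_norm {ι : Type*} [Fintype ι] (T : M →ₗ[ℝ] ι → ℝ)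
    (hT : ∀ w, ∃ m ∈ S, T m = w) : ∃ C, 0 ≤ C ∧ ∀ w, ∃ m ∈ S, T m = w ∧ p m ≤ C * ‖w‖ := by
  classical
  choose e heS he using fun i => hT (Pi.single i 1)
  refine ⟨∑ i, p (e i), by positivity, fun w => ⟨∑ i, w i • e i,
    S.sum_mem fun i _ => S.smul_mem _ (heS i), ?_, ?_⟩⟩
  · simpa [he] using (Pi.basisFun ℝ ι).sum_repr w
  · calc p (∑ i, w i • e i) ≤ ∑ i, p (w i • e i) :=
          Finset.le_sum_of_subadditive p (map_zero p).le (map_add_le_add p) _ _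
      _ = ∑ i, ‖w i‖ * p (e i) := by simp only [map_smul_eq_mul]
      _ ≤ ∑ i, ‖w‖ * p (e i) := by gcongr with i; exact norm_le_pi_norm w i
      _ = (∑ i, p (e i)) * ‖w‖ := by rw [← Finset.mul_sum, mul_comm]

theorem mem_closure_image_closedBall_inter {W : Type*} [NormedAddCommGroup W]
    [NormedSpace ℝ W] (T : M →ₗ[ℝ] W) {w : W}
    (hw : ∀ f : W →L[ℝ] ℝ, (∃ u, ∀ m ∈ S, p m ≤ 1 → f (T m) ≤ u) → f w = 0) {ε : ℝ}
    (hε : 0 < ε) : w ∈ closure (T '' (p.closedBall 0 ε ∩ S)) := by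
  by_contra h
  obtain ⟨f, u, hfu, hfw⟩ := geometric_hahn_banach_closed_point
    (((p.convex_closedBall 0 ε).inter S.convex).linear_image T).closure isClosed_closure h
  have hu : 0 < u := by
    simpa using hfu 0 (subset_closure ⟨0, ⟨p.mem_closedBall_self hε.le, S.zero_mem⟩, map_zero T⟩)
  have hbdd : ∃ u, ∀ m ∈ S, p m ≤ 1 → f (T m) ≤ u := by
    refine ⟨u / ε, fun m hmS hm => ?_⟩
    have hεm : ε • m ∈ p.closedBall 0 ε := by
      rw [mem_closedBall_zero, map_smul_eq_mul, Real.norm_of_nonneg hε.le]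
      nlinarith
    have := hfu _ (subset_closure ⟨_, ⟨hεm, S.smul_mem ε hmS⟩, rfl⟩)
    rw [map_smul, map_smul, smul_eq_mul] at this
    rw [le_div_iff₀ hε]
    linarith
  linarith [hw f hbdd]

theorem exists_mem_preimage_le {ι : Type*} [Fintype ι] (T : M →ₗ[ℝ] ι → ℝ)
    (hT : ∀ w, ∃ m ∈ S, T m = w) {w : ι → ℝ}
    (hw : ∀ f : (ι → ℝ) →L[ℝ] ℝ, (∃ u, ∀ m ∈ S, p m ≤ 1 → f (T m) ≤ u) → f w = 0) {ε : ℝ}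
    (hε : 0 < ε) : ∃ m ∈ S, T m = w ∧ p m ≤ ε := by
  obtain ⟨C, hC, hCT⟩ := p.exists_mem_preimage_le_mul_norm S T hT
  obtain ⟨_, ⟨m₁, ⟨hm₁, hm₁S⟩, rfl⟩, hdist⟩ := Metric.mem_closure_iff.1
    (p.mem_closure_image_closedBall_inter S T hw (half_pos hε)) (ε / 2 / (C + 1)) (by positivity)
  obtain ⟨m₂, hm₂S, hm₂, hm₂C⟩ := hCT (w - T m₁)
  refine ⟨m₁ + m₂, S.add_mem hm₁S hm₂S, by rw [map_add, hm₂, add_sub_cancel], ?_⟩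
  rw [mem_closedBall_zero] at hm₁
  rw [dist_eq_norm] at hdist
  have : C * ‖w - T m₁‖ ≤ ε / 2 :=
    calc C * ‖w - T m₁‖ ≤ (C + 1) * (ε / 2 / (C + 1)) := by gcongr; linarith
      _ = ε / 2 := by field_simp
  linarith [map_add_le_add p m₁ m₂]

end Seminorm

theorem LinearMap.apply_comp_eq_apply_sum_smul {V ι : Type*} [AddCommGroup V] [Module ℝ V]
    [Fintype ι] [DecidableEq ι] (g : (ι → ℝ) →ₗ[ℝ] ℝ) (Λ : V →ₗ[ℝ] ℝ) (P : ι → V) :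
    g (fun j => Λ (P j)) = Λ (∑ j, g (Pi.single j 1) • P j) := by
  rw [LinearMap.pi_apply_eq_sum_univ g, map_sum]
  refine Finset.sum_congr rfl fun j _ => ?_
  rw [map_smul, smul_eq_mul, smul_eq_mul, mul_comm]
  congr 2
  ext i
  simp [Pi.single_apply, eq_comm]

theorem Submodule.eqOn_of_basis {V ι : Type*} [AddCommGroup V] [Module ℝ V] {U : Submodule ℝ V}
    (b : Module.Basis ι ℝ U) {Λ G : V →ₗ[ℝ] ℝ} (h : ∀ j, Λ (b j) = G (b j)) :
    ∀ P ∈ U, Λ P = G P := fun P hP =>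
  LinearMap.congr_fun (b.ext (f₁ := Λ ∘ₗ U.subtype) (f₂ := G ∘ₗ U.subtype) h) ⟨P, hP⟩

section Moments

variable {d : ℕ}

def momentMap :
    (EuclideanSpace ℝ (Fin d) →₀ ℝ) →ₗ[ℝ] MvPolynomial (Fin d) ℝ →ₗ[ℝ] ℝ :=
  Finsupp.linearCombination ℝ fun x => (aeval fun i => x i).toLinearMap

theorem momentMap_apply (ρ : EuclideanSpace ℝ (Fin d) →₀ ℝ) (P : MvPolynomial (Fin d) ℝ) :
    momentMap ρ P = ρ.sum fun x a => a * eval (fun i => x i) P := by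
  simp [momentMap, Finsupp.linearCombination_apply, LinearMap.finsupp_sum_apply]

theorem momentMap_single (x : EuclideanSpace ℝ (Fin d)) (a : ℝ) (P : MvPolynomial (Fin d) ℝ) :
    momentMap (Finsupp.single x a) P = a * eval (fun i => x i) P := by
  simp [momentMap]

def momentVector {ι : Type*} (P : ι → MvPolynomial (Fin d) ℝ) :
    (EuclideanSpace ℝ (Fin d) →₀ ℝ) →ₗ[ℝ] ι → ℝ :=
  LinearMap.pi fun j => LinearMap.applyₗ (P j) ∘ₗ momentMap

variable {K : Set (EuclideanSpace ℝ (Fin d))}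

theorem momentVector_surjective (hZ : IsZariskiDense K) {ι : Type*} [Fintype ι]
    {P : ι → MvPolynomial (Fin d) ℝ} (hP : LinearIndependent ℝ P) :
    ∀ w, ∃ ρ ∈ Finsupp.supported ℝ ℝ K, momentVector P ρ = w := by
  classical
  suffices h : (Finsupp.supported ℝ ℝ K).map (momentVector P) = ⊤ from fun w =>
    (Submodule.mem_map.1 (h ▸ Submodule.mem_top : w ∈ _))
  by_contra hne
  obtain ⟨g, hg0, hg⟩ := Submodule.exists_le_ker_of_lt_top _ (lt_top_iff_ne_top.2 hne)
  have hQ : ∑ j, g (Pi.single j 1) • P j = 0 := hZ _ fun x hx => by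
    have := hg (Submodule.mem_map_of_mem (Finsupp.single_mem_supported ℝ 1 hx))
    rw [LinearMap.mem_ker] at this
    rw [← one_mul (eval _ _), ← momentMap_single, ← LinearMap.apply_comp_eq_apply_sum_smul]
    exact this
  refine hg0 ((Pi.basisFun ℝ ι).ext fun j => ?_)
  simpa using Fintype.linearIndependent_iff.1 hP _ hQ j

theorem mem_polyGrowthSpace_of_forall_le {n : ℕ} {Q : MvPolynomial (Fin d) ℝ}
    (hQ : ∃ u, ∀ ρ ∈ Finsupp.supported ℝ ℝ K, weightedMass n ρ ≤ 1 → momentMap ρ Q ≤ u) :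
    Q ∈ polyGrowthSpace d K (fun _ => 1) n := by
  obtain ⟨u, hu⟩ := hQ
  refine ⟨u, fun x hx => ?_⟩
  have hw : 0 < (1 + ‖x‖) ^ n := by positivity
  -- test `Q` against the point masses `±(1 + ‖x‖)⁻ⁿ δₓ`, of unit weighted mass
  have key : ∀ s : ℝ, |s| = 1 → s * eval (fun i => x i) Q ≤ u * (1 + ‖x‖) ^ n := fun s hs => by
    have := hu (Finsupp.single x (s / (1 + ‖x‖) ^ n)) (Finsupp.single_mem_supported ℝ _ hx)
      (by rw [weightedMass_single, abs_div, hs, abs_of_pos hw, div_mul_cancel₀ _ hw.ne'])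
    rwa [momentMap_single, div_mul_eq_mul_div, div_le_iff₀ hw] at this
  rw [mul_one, abs_le]
  constructor
  · linarith [key (-1) (by simp)]
  · linarith [key 1 (by simp)]

variable (hZ : IsZariskiDense K) (U : Submodule ℝ (MvPolynomial (Fin d) ℝ))
  [FiniteDimensional ℝ U]
include hZ

theorem exists_supported_momentMap_eqOn (G : MvPolynomial (Fin d) ℝ →ₗ[ℝ] ℝ) :
    ∃ ρ ∈ Finsupp.supported ℝ ℝ K, ∀ P ∈ U, momentMap ρ P = G P := by
  let b := Module.finBasis ℝ U
  obtain ⟨ρ, hρK, hρ⟩ := momentVector_surjective hZ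
    (b.linearIndependent.map' U.subtype U.ker_subtype) fun j => G (b j)
  exact ⟨ρ, hρK, U.eqOn_of_basis b fun j => congrFun hρ j⟩

theorem exists_supported_momentMap_eqOn_weightedMass_le {n : ℕ}
    (G : MvPolynomial (Fin d) ℝ →ₗ[ℝ] ℝ) (hG : ∀ P ∈ polyGrowthSpace d K (fun _ => 1) n, G P = 0)
    {ε : ℝ} (hε : 0 < ε) :
    ∃ ρ ∈ Finsupp.supported ℝ ℝ K, (∀ P ∈ U, momentMap ρ P = G P) ∧ weightedMass n ρ ≤ ε := by
  let b := Module.finBasis ℝ U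
  let P := fun j => (b j : MvPolynomial (Fin d) ℝ)
  have hw : ∀ f : (Fin (Module.finrank ℝ U) → ℝ) →L[ℝ] ℝ,
      (∃ u, ∀ ρ ∈ Finsupp.supported ℝ ℝ K, weightedMass n ρ ≤ 1 → f (momentVector P ρ) ≤ u) →
        f (fun j => G (P j)) = 0 := by
    rintro f ⟨u, hu⟩
    rw [← f.coe_coe, LinearMap.apply_comp_eq_apply_sum_smul]
    refine hG _ (mem_polyGrowthSpace_of_forall_le ⟨u, fun ρ hρK hρ1 => ?_⟩)
    rw [← LinearMap.apply_comp_eq_apply_sum_smul]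
    exact hu ρ hρK hρ1
  obtain ⟨ρ, hρK, hρ, hρε⟩ := (weightedMass n).exists_mem_preimage_le _ (momentVector P)
    (momentVector_surjective hZ (b.linearIndependent.map' U.subtype U.ker_subtype)) hw hε
  exact ⟨ρ, hρK, U.eqOn_of_basis b fun j => congrFun hρ j, hρε⟩

end Moments

theorem exists_seq_forall_partialSum {α : Type*} [AddCommMonoid α] (I Q : ℕ → α → Prop)
    {a₀ : α} (h₀ : I 0 a₀) (step : ∀ n a, I n a → ∃ t, Q n t ∧ I (n + 1) (a + t)) :
    ∃ t : ℕ → α, (∀ n, Q n (t (n + 1))) ∧ ∀ n, I n (∑ k ∈ Finset.range (n + 1), t k) := by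
  choose! next hQ hI using step
  let s : ℕ → α := fun n => Nat.rec a₀ (fun n a => a + next n a) n
  have hs : ∀ n, I n (s n) := fun n => by
    induction n with
    | zero => exact h₀
    | succ n ih => exact hI n _ ih
  let t : ℕ → α := fun n => Nat.casesOn n a₀ fun n => next n (s n)
  have hts : ∀ n, ∑ k ∈ Finset.range (n + 1), t k = s n := fun n => by
    induction n with
    | zero => simp [t, s]
    | succ n ih => rw [Finset.sum_range_succ, ih]
  exact ⟨t, fun n => hQ n _ (hs n), fun n => hts n ▸ hs n⟩

theorem hasSum_of_sum_range_eq {α : Type*} [AddCommGroup α] [TopologicalSpace α] {f : ℕ → α}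
    {c : α} {m : ℕ} (h : ∀ n, m ≤ n → ∑ k ∈ Finset.range (n + 1), f k = c) : HasSum f c := by
  have hf : ∀ k ∉ Finset.range (m + 1), f k = 0 := by
    intro k hk
    rw [Finset.mem_range, not_lt] at hk
    obtain ⟨n, rfl⟩ : ∃ n, k = n + 1 := Nat.exists_eq_add_one_of_ne_zero (by omega)
    have := h (n + 1) (by omega)
    rwa [Finset.sum_range_succ, h n (by omega), add_eq_left] at this
  exact h m le_rfl ▸ hasSum_sum_of_ne_finset_zero hf

section Sufficiency

variable {d : ℕ} {K : Set (EuclideanSpace ℝ (Fin d))} (hZ : IsZariskiDense K)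
  (hfin : ∀ n, FiniteDimensional ℝ (polyGrowthSpace d K (fun _ => 1) n))
include hZ hfin

theorem exists_supported_seq_sum_range_momentMap (L : MvPolynomial (Fin d) ℝ →ₗ[ℝ] ℝ) :
    ∃ ρ : ℕ → EuclideanSpace ℝ (Fin d) →₀ ℝ, (∀ k, ρ k ∈ Finsupp.supported ℝ ℝ K) ∧
      (∀ n, weightedMass n (ρ (n + 1)) ≤ (1 / 2) ^ n) ∧
      ∀ n, ∀ P ∈ polyGrowthSpace d K (fun _ => 1) n,
        ∑ k ∈ Finset.range (n + 1), momentMap (ρ k) P = L P := by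
  obtain ⟨σ₀, hσ₀K, hσ₀⟩ :=
    exists_supported_momentMap_eqOn hZ (polyGrowthSpace d K (fun _ => 1) 0) L
  obtain ⟨ρ, hρ, hI⟩ := exists_seq_forall_partialSum
    (fun n σ => σ ∈ Finsupp.supported ℝ ℝ K ∧
      ∀ P ∈ polyGrowthSpace d K (fun _ => 1) n, momentMap σ P = L P)
    (fun n τ => τ ∈ Finsupp.supported ℝ ℝ K ∧ weightedMass n τ ≤ (1 / 2) ^ n)
    ⟨hσ₀K, hσ₀⟩ fun n σ ⟨hσK, hσ⟩ => by
      obtain ⟨τ, hτK, hτ, hτε⟩ := exists_supported_momentMap_eqOn_weightedMass_le hZ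
        (polyGrowthSpace d K (fun _ => 1) (n + 1)) (L - momentMap σ)
        (fun P hP => sub_eq_zero.2 (hσ P hP).symm) (by positivity : (0 : ℝ) < (1 / 2) ^ n)
      refine ⟨τ, ⟨hτK, hτε⟩, add_mem hσK hτK, fun P hP => ?_⟩
      rw [map_add, LinearMap.add_apply, hτ P hP, LinearMap.sub_apply, add_sub_cancel]
  refine ⟨ρ, ?_, fun n => (hρ n).2, fun n P hP => ?_⟩
  · rintro (_ | k)
    · simpa using (hI 0).1
    · exact (hρ k).1
  · rw [← LinearMap.sum_apply, ← map_sum]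
    exact (hI n).2 P hP

theorem isMomentFunctionalOn_of_isZariskiDense (L : MvPolynomial (Fin d) ℝ →ₗ[ℝ] ℝ) :
    IsMomentFunctionalOn K L := by
  obtain ⟨ρ, hρK, hρ, hρL⟩ := exists_supported_seq_sum_range_momentMap hZ hfin L
  obtain ⟨μ, hμ, hμK, hμρ⟩ := exists_signedMeasure_hasSum hρK (summable_weightedMass hρ)
  refine ⟨μ, hμ, hμK, fun P => ?_⟩
  obtain ⟨n, C, hC⟩ := exists_mem_polyGrowthSpace K P
  refine (hμρ _ (continuous_eval_euclideanSpace P) n C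
    fun x hx => by simpa using hC x hx).unique ?_
  simpa only [momentMap_apply] using
    hasSum_of_sum_range_eq fun m hm => hρL m P (polyGrowthSpace_mono hm ⟨C, hC⟩)

end Sufficiency

theorem unrestrictedMomentProblem_signedMeasure_iff_general
    (d : ℕ) (K : Set (EuclideanSpace ℝ (Fin d))) :
    (∀ c : (Fin d → ℕ) → ℝ, ∃ μ : MeasureTheory.SignedMeasure (EuclideanSpace ℝ (Fin d)),
        (∀ n : ℕ, MeasureTheory.Integrable (fun x => (1 + ‖x‖) ^ n) μ.totalVariation) ∧
        μ.totalVariation Kᶜ = 0 ∧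
        ∀ α : Fin d → ℕ, sintegral μ (fun x => ∏ i, x i ^ α i) = c α)
    ↔
    ((∀ P : MvPolynomial (Fin d) ℝ,
        (∀ x ∈ K, MvPolynomial.eval (fun i => x i) P = 0) → P = 0) ∧
      ∀ n : ℕ, FiniteDimensional ℝ (polyGrowthSpace d K (fun _ => 1) n)) := by
  constructor
  · intro h
    have hL : ∀ L, IsMomentFunctionalOn K L := fun L => by
      obtain ⟨μ, hμ, hμK, hmom⟩ := h fun α => L (∏ i, X i ^ α i)
      exact ⟨μ, hμ, hμK, sintegral_eval_eq hμ hmom⟩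
    exact ⟨isZariskiDense_of_forall_isMomentFunctionalOn hL,
      finiteDimensional_of_forall_isMomentFunctionalOn hL⟩
  · rintro ⟨hZ, hfin⟩ c
    obtain ⟨L, hL⟩ := exists_linearMap_prod_X_pow_eq c
    obtain ⟨μ, hμ, hμK, hμL⟩ := isMomentFunctionalOn_of_isZariskiDense hZ hfin L
    exact ⟨μ, hμ, hμK, fun α => by simpa [hL] using hμL (∏ i, X i ^ α i)⟩

/-- Schmüdgen's theorem. The unrestricted `K`-moment problem is
solvable in `M_pol(ℝ^d)` iff `K` is Zariski dense and every `N_n(K)` is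
finite-dimensional. -/
theorem unrestrictedMomentProblem_signedMeasure_iff
    (d : ℕ) (K : Set (EuclideanSpace ℝ (Fin d))) (hK : IsClosed K) :
    (∀ c : (Fin d → ℕ) → ℝ, ∃ μ : MeasureTheory.SignedMeasure (EuclideanSpace ℝ (Fin d)),
        (∀ n : ℕ, MeasureTheory.Integrable (fun x => (1 + ‖x‖) ^ n) μ.totalVariation) ∧
        μ.totalVariation Kᶜ = 0 ∧
        ∀ α : Fin d → ℕ, sintegral μ (fun x => ∏ i, x i ^ α i) = c α)
    ↔
    ((∀ P : MvPolynomial (Fin d) ℝ,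
        (∀ x ∈ K, MvPolynomial.eval (fun i => x i) P = 0) → P = 0) ∧
      ∀ n : ℕ, FiniteDimensional ℝ (polyGrowthSpace d K (fun _ => 1) n)) :=
  unrestrictedMomentProblem_signedMeasure_iff_general d K
end
end

section
/- Let M = (M_p)_{p∈ℕ} be a weight sequence satisfying (M.3). For every a > 0 there exist C₀, C₁ > 0 such that ν_M(at)^{C₀} ≤ C₁ ν_M(t) for all t ≥ 0. -/
open MeasureTheory

noncomputable section

/-! Put `ρ_i = (i + 1) M_i / M_{i+1}`, so that `p! / M_p = ρ_0 ⋯ ρ_{p-1}`. Log-convexity makes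
`M_q / M_{q+1}` decreasing, and `(M.3)` makes its tail sums shrink by a fixed factor `< 1` under
`p ↦ 2p`; iterating, for every `B` there is `K` with `B ρ_{Kp+k} ≤ ρ_p` for `p ≥ 1`, `k < K`.
Multiplying these block by block gives `a^q q! / M_q ≤ D (p! / M_p)^K` for `q = Kp + s`, `s < K`.
Since `ν_M ≤ 1`, `ν_M(at)^{2K-1} ≤ ν_M(at)^{K+s} ≤ (at)^{Kp+s} (M_p / p!)^K M_1^s`, which is then
at most `C₁ t^q M_q / q!`; take the infimum over `q`. -/

open Finset
open scoped Nat

section TailSums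

variable {r : ℕ → ℝ}

theorem tsum_nat_add_eq_sum_range_add (hsum : Summable r) (p n : ℕ) :
    ∑' q, r (p + q) = ∑ i ∈ range n, r (p + i) + ∑' q, r (p + n + q) := by
  have hp : Summable fun q => r (p + q) := by
    simpa only [add_comm] using (summable_nat_add_iff p).2 hsum
  rw [← hp.sum_add_tsum_nat_add n]
  simp only [add_comm, add_left_comm]

theorem tsum_nat_add_two_mul_le (hr : Antitone r) (hsum : Summable r) {C : ℝ} (hC : 0 ≤ C)
    (hM3 : ∀ p : ℕ, 1 ≤ p → ∑' q, r (p + q) ≤ C * p * r p) {p : ℕ} (hp : 1 ≤ p) :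
    ∑' q, r (2 * p + q) ≤ 2 * C / (2 * C + 1) * ∑' q, r (p + q) := by
  have hsplit := tsum_nat_add_eq_sum_range_add hsum p p
  rw [← two_mul] at hsplit
  have hlow : p * r (2 * p) ≤ ∑ i ∈ range p, r (p + i) := by
    simpa using card_nsmul_le_sum (range p) (fun i => r (p + i)) (r (2 * p))
      fun i hi => hr (by simp at hi; omega)
  have hup := hM3 (2 * p) (by omega)
  push_cast at hup
  rw [div_mul_eq_mul_div, le_div_iff₀ (by positivity)]
  nlinarith [mul_le_mul_of_nonneg_left hlow hC]

theorem tsum_nat_add_pow_two_mul_le (hr : Antitone r) (hsum : Summable r) {C : ℝ} (hC : 0 ≤ C)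
    (hM3 : ∀ p : ℕ, 1 ≤ p → ∑' q, r (p + q) ≤ C * p * r p) {p : ℕ} (hp : 1 ≤ p) (j : ℕ) :
    ∑' q, r (2 ^ j * p + q) ≤ (2 * C / (2 * C + 1)) ^ j * ∑' q, r (p + q) := by
  induction j with
  | zero => simp
  | succ j ih =>
    have hj : 1 ≤ 2 ^ j * p := Nat.one_le_iff_ne_zero.2 (by positivity)
    calc ∑' q, r (2 ^ (j + 1) * p + q) = ∑' q, r (2 * (2 ^ j * p) + q) := by ring_nf
      _ ≤ 2 * C / (2 * C + 1) * ∑' q, r (2 ^ j * p + q) :=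
        tsum_nat_add_two_mul_le hr hsum hC hM3 hj
      _ ≤ 2 * C / (2 * C + 1) * ((2 * C / (2 * C + 1)) ^ j * ∑' q, r (p + q)) :=
        mul_le_mul_of_nonneg_left ih (by positivity)
      _ = _ := by ring

theorem mul_le_tsum_nat_add_of_antitone (hr : Antitone r) (hr0 : ∀ n, 0 ≤ r n)
    (hsum : Summable r) (n : ℕ) : n * r (2 * n) ≤ ∑' q, r (n + q) := by
  have hn : Summable fun q => r (n + q) := by
    simpa only [add_comm] using (summable_nat_add_iff n).2 hsum
  calc (n : ℝ) * r (2 * n) ≤ ∑ i ∈ range n, r (n + i) := by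
        simpa using card_nsmul_le_sum (range n) (fun i => r (n + i)) (r (2 * n))
          fun i hi => hr (by simp at hi; omega)
    _ ≤ ∑' q, r (n + q) := hn.sum_le_tsum _ fun i _ => hr0 _

theorem succ_mul_le_tsum_of_antitone (hr : Antitone r) (hr0 : ∀ n, 0 ≤ r n)
    (hsum : Summable r) (n : ℕ) : (n + 1) * r n ≤ ∑' q, r q := by
  calc ((n : ℝ) + 1) * r n ≤ ∑ i ∈ range (n + 1), r i := by
        simpa using card_nsmul_le_sum (range (n + 1)) r (r n)
          fun i hi => hr (by simp at hi; omega)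
    _ ≤ ∑' q, r q := hsum.sum_le_tsum _ fun i _ => hr0 i

-- With `r p = M_p / M_{p+1} = 1 / m_{p+1}`, this says that under `(M.3)` the quotients
-- `m_p / p` grow by any prescribed factor along `p ↦ K p`.
theorem exists_mul_mul_le_of_tsum_nat_add_le (hr : Antitone r) (hr0 : ∀ n, 0 ≤ r n)
    (hsum : Summable r) {C : ℝ} (hC : 0 ≤ C)
    (hM3 : ∀ p : ℕ, 1 ≤ p → ∑' q, r (p + q) ≤ C * p * r p) {R : ℝ} (hR : 0 ≤ R) :
    ∃ K : ℕ, 0 < K ∧ ∀ p : ℕ, 1 ≤ p → R * (K * p : ℕ) * r (K * p) ≤ p * r p := by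
  set θ := 2 * C / (2 * C + 1)
  have hθ : θ < 1 := by rw [div_lt_one (by positivity)]; linarith
  obtain ⟨j, hj⟩ := exists_pow_lt_of_lt_one (by positivity : 0 < 1 / (2 * C * R + 1)) hθ
  rw [lt_div_iff₀ (by positivity)] at hj
  refine ⟨2 ^ (j + 1), by positivity, fun p hp => ?_⟩
  have hlow := mul_le_tsum_nat_add_of_antitone hr hr0 hsum (2 ^ j * p)
  have hup := tsum_nat_add_pow_two_mul_le hr hsum hC hM3 hp j
  have hT := hM3 p hp
  have hK : 2 ^ (j + 1) * p = 2 * (2 ^ j * p) := by ring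
  rw [hK]
  push_cast at hlow ⊢
  have hθj : 0 ≤ θ ^ j := by positivity
  calc R * (2 * (2 ^ j * p)) * r (2 * (2 ^ j * p))
      = 2 * R * ((2 ^ j * p) * r (2 * (2 ^ j * p))) := by ring
    _ ≤ 2 * R * (θ ^ j * (C * p * r p)) := mul_le_mul_of_nonneg_left
      (hlow.trans (hup.trans (mul_le_mul_of_nonneg_left hT hθj))) (by positivity)
    _ = θ ^ j * (2 * C * R) * (p * r p) := by ring
    _ ≤ 1 * (p * r p) :=
      mul_le_mul_of_nonneg_right (by nlinarith) (mul_nonneg p.cast_nonneg (hr0 p))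
    _ = p * r p := one_mul _

theorem exists_block_le_of_tsum_nat_add_le (hr : Antitone r) (hr0 : ∀ n, 0 ≤ r n)
    (hsum : Summable r) {C : ℝ} (hC : 0 ≤ C)
    (hM3 : ∀ p : ℕ, 1 ≤ p → ∑' q, r (p + q) ≤ C * p * r p) {B : ℝ} (hB : 0 ≤ B) :
    ∃ K : ℕ, 0 < K ∧ ∀ p : ℕ, 1 ≤ p → ∀ k < K,
      B * ((K * p + k : ℕ) + 1) * r (K * p + k) ≤ (p + 1) * r p := by
  obtain ⟨K, hK, hgrowth⟩ := exists_mul_mul_le_of_tsum_nat_add_le hr hr0 hsum hC hM3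
    (by positivity : 0 ≤ 2 * B)
  refine ⟨K, hK, fun p hp k hk => ?_⟩
  have hidx : ((K * p + k : ℕ) : ℝ) + 1 ≤ 2 * (K * p : ℕ) := by
    have : K * p + k + 1 ≤ 2 * (K * p) := by nlinarith
    exact_mod_cast this
  calc B * ((K * p + k : ℕ) + 1) * r (K * p + k) ≤ B * (2 * (K * p : ℕ)) * r (K * p) := by
        gcongr
        · exact hr0 _
        · exact hr (by omega)
    _ = 2 * B * (K * p : ℕ) * r (K * p) := by ring
    _ ≤ p * r p := hgrowth p hp
    _ ≤ (p + 1) * r p := by nlinarith [hr0 p]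

end TailSums

section BlockProducts

variable {ρ : ℕ → ℝ} {B : ℝ} {K : ℕ}

theorem pow_mul_prod_range_mul_le (hρ : ∀ i, 0 ≤ ρ i) (hB : 0 ≤ B)
    (hblock : ∀ p : ℕ, 1 ≤ p → ∀ k < K, B * ρ (K * p + k) ≤ ρ p) (p : ℕ) :
    B ^ (K * p) * (∏ i ∈ range (K * (p + 1)), ρ i) * ρ 0 ^ K ≤
      (∏ i ∈ range K, ρ i) * (∏ i ∈ range (p + 1), ρ i) ^ K := by
  induction p with
  | zero => simp
  | succ p ih =>
    have hnext : ∏ k ∈ range K, (B * ρ (K * (p + 1) + k)) ≤ ρ (p + 1) ^ K := by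
      simpa using prod_le_prod (fun k _ => mul_nonneg hB (hρ _))
        fun k hk => hblock (p + 1) (by omega) k (mem_range.1 hk)
    calc B ^ (K * (p + 1)) * (∏ i ∈ range (K * (p + 1 + 1)), ρ i) * ρ 0 ^ K
        = B ^ (K * p) * (∏ i ∈ range (K * (p + 1)), ρ i) * ρ 0 ^ K *
            ∏ k ∈ range K, (B * ρ (K * (p + 1) + k)) := by
          rw [prod_mul_distrib, prod_const, card_range, mul_add_one K (p + 1), prod_range_add,
            mul_add_one K p, pow_add]
          ring
      _ ≤ (∏ i ∈ range K, ρ i) * (∏ i ∈ range (p + 1), ρ i) ^ K * ρ (p + 1) ^ K :=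
          mul_le_mul ih hnext (prod_nonneg fun k _ => mul_nonneg hB (hρ _))
            (mul_nonneg (prod_nonneg fun i _ => hρ i) (pow_nonneg (prod_nonneg fun i _ => hρ i) K))
      _ = (∏ i ∈ range K, ρ i) * (∏ i ∈ range (p + 1 + 1), ρ i) ^ K := by
          rw [prod_range_succ _ (p + 1), mul_pow, mul_assoc]

theorem pow_mul_prod_range_add_le (hρ : ∀ i, 0 ≤ ρ i) {S : ℝ} (hS : ∀ i, ρ i ≤ S)
    (hB : 0 ≤ B) (n s : ℕ) :
    B ^ (n + s) * ∏ i ∈ range (n + s), ρ i ≤ B ^ n * (∏ i ∈ range n, ρ i) * (B * S) ^ s := by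
  have htail : ∏ i ∈ range s, (B * ρ (n + i)) ≤ (B * S) ^ s := by
    simpa using prod_le_prod (s := range s) (fun i _ => mul_nonneg hB (hρ _))
      fun i _ => mul_le_mul_of_nonneg_left (hS (n + i)) hB
  calc B ^ (n + s) * ∏ i ∈ range (n + s), ρ i
      = B ^ n * (∏ i ∈ range n, ρ i) * ∏ i ∈ range s, (B * ρ (n + i)) := by
        rw [prod_mul_distrib, prod_const, card_range, prod_range_add, pow_add]
        ring
    _ ≤ B ^ n * (∏ i ∈ range n, ρ i) * (B * S) ^ s :=
        mul_le_mul_of_nonneg_left htail (mul_nonneg (by positivity) (prod_nonneg fun i _ => hρ i))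

theorem exists_pow_mul_prod_range_le (hρ : ∀ i, 0 ≤ ρ i) (hρ0 : 0 < ρ 0) {S : ℝ}
    (hS : ∀ i, ρ i ≤ S) (hB : 0 ≤ B)
    (hblock : ∀ p : ℕ, 1 ≤ p → ∀ k < K, B * ρ (K * p + k) ≤ ρ p) :
    ∃ D : ℝ, 0 < D ∧ ∀ p s : ℕ, s < K →
      B ^ (K * p + s) * ∏ i ∈ range (K * p + s), ρ i ≤ D * (∏ i ∈ range p, ρ i) ^ K := by
  set D₀ := max 1 (B ^ K * (∏ i ∈ range K, ρ i) / ρ 0 ^ K)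
  set E := max 1 (B * S) ^ K
  have hBS : 0 ≤ B * S := mul_nonneg hB ((hρ 0).trans (hS 0))
  refine ⟨D₀ * E, by positivity, fun p s hs => ?_⟩
  have hE : (B * S) ^ s ≤ E :=
    (pow_le_pow_left₀ (by positivity) (le_max_right 1 _) s).trans
      (pow_le_pow_right₀ (le_max_left 1 _) hs.le)
  have hLp : 0 ≤ (∏ i ∈ range p, ρ i) ^ K := pow_nonneg (prod_nonneg fun i _ => hρ i) K
  have hfull : B ^ (K * p) * ∏ i ∈ range (K * p), ρ i ≤ D₀ * (∏ i ∈ range p, ρ i) ^ K := by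
    rcases p with _ | p
    · simp [D₀]
    · have h := pow_mul_prod_range_mul_le hρ hB hblock p
      rw [← le_div_iff₀ (by positivity)] at h
      calc B ^ (K * (p + 1)) * ∏ i ∈ range (K * (p + 1)), ρ i
          = B ^ K * (B ^ (K * p) * (∏ i ∈ range (K * (p + 1)), ρ i)) := by ring
        _ ≤ B ^ K * ((∏ i ∈ range K, ρ i) * (∏ i ∈ range (p + 1), ρ i) ^ K / ρ 0 ^ K) :=
          mul_le_mul_of_nonneg_left h (by positivity)
        _ = B ^ K * (∏ i ∈ range K, ρ i) / ρ 0 ^ K * (∏ i ∈ range (p + 1), ρ i) ^ K := by ring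
        _ ≤ D₀ * (∏ i ∈ range (p + 1), ρ i) ^ K := by gcongr; exact le_max_right _ _
  calc B ^ (K * p + s) * ∏ i ∈ range (K * p + s), ρ i
      ≤ B ^ (K * p) * (∏ i ∈ range (K * p), ρ i) * (B * S) ^ s :=
        pow_mul_prod_range_add_le hρ hS hB _ _
    _ ≤ D₀ * (∏ i ∈ range p, ρ i) ^ K * E :=
        mul_le_mul hfull hE (by positivity) (by positivity)
    _ = D₀ * E * (∏ i ∈ range p, ρ i) ^ K := by ring

end BlockProducts

section WeightSequence

variable {M : ℕ → ℝ}

theorem IsWeightSeq.antitone_div_succ (hM : IsWeightSeq M) :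
    Antitone fun p => M p / M (p + 1) := by
  obtain ⟨hpos, -, -, hlc, -⟩ := hM
  refine antitone_nat_of_succ_le fun p => ?_
  rw [div_le_div_iff₀ (hpos _) (hpos _)]
  nlinarith [hlc p, hpos p, hpos (p + 1), hpos (p + 2)]

theorem prod_range_succ_mul_div_eq (hpos : ∀ p, 0 < M p) (h0 : M 0 = 1) (q : ℕ) :
    ∏ i ∈ range q, ((i + 1) * (M i / M (i + 1))) = q ! / M q := by
  induction q with
  | zero => simp [h0]
  | succ q ih =>
    rw [prod_range_succ, ih, Nat.factorial_succ, Nat.cast_mul]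
    have := (hpos q).ne'
    have := (hpos (q + 1)).ne'
    field_simp
    push_cast
    ring

theorem exists_pow_mul_pow_le_of_condM3 (hM : IsWeightSeq M) (hM3 : CondM3 M) {a : ℝ}
    (ha : 0 ≤ a) :
    ∃ K : ℕ, 0 < K ∧ ∃ D : ℝ, 0 < D ∧ ∀ p s : ℕ, s < K →
      a ^ (K * p + s) * (M p / p !) ^ K ≤ D * (M (K * p + s) / (K * p + s) !) := by
  set r : ℕ → ℝ := fun p => M p / M (p + 1)
  have hanti := hM.antitone_div_succ
  obtain ⟨hpos, h0, -, -, hsum⟩ := hM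
  obtain ⟨C, hC, hCM3⟩ := hM3
  have hr0 : ∀ n, 0 ≤ r n := fun n => (div_pos (hpos n) (hpos (n + 1))).le
  obtain ⟨K, hK, hblock⟩ := exists_block_le_of_tsum_nat_add_le hanti hr0 hsum
    hC.le hCM3 ha
  refine ⟨K, hK, ?_⟩
  obtain ⟨D, hD, hprod⟩ := exists_pow_mul_prod_range_le (ρ := fun i => (i + 1) * r i)
    (fun i => mul_nonneg (by positivity) (hr0 i)) (by simp [r, (div_pos (hpos 0) (hpos 1))])
    (succ_mul_le_tsum_of_antitone hanti hr0 hsum) ha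
    fun p hp k hk => by simpa only [mul_assoc, Nat.cast_add] using hblock p hp k hk
  refine ⟨D, hD, fun p s hs => ?_⟩
  have h := hprod p s hs
  simp only [r, prod_range_succ_mul_div_eq hpos h0] at h
  have hp := hpos p
  have hq := hpos (K * p + s)
  have hpf : (0 : ℝ) < p ! := by positivity
  have hqf : (0 : ℝ) < (K * p + s) ! := by positivity
  calc a ^ (K * p + s) * (M p / p !) ^ K
      = a ^ (K * p + s) * ((K * p + s) ! / M (K * p + s)) * (M (K * p + s) / (K * p + s) !) *
          (M p / p !) ^ K := by field_simp
    _ ≤ D * (p ! / M p) ^ K * (M (K * p + s) / (K * p + s) !) * (M p / p !) ^ K := by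
        gcongr
    _ = D * (M (K * p + s) / (K * p + s) !) := by
        rw [mul_right_comm, mul_assoc D, ← mul_pow, div_mul_div_cancel₀ hp.ne', div_self hpf.ne',
          one_pow, mul_one]

end WeightSequence

section NuM

variable {M : ℕ → ℝ} {t : ℝ}

theorem nuM_le (hpos : ∀ p, 0 < M p) (ht : 0 ≤ t) (p : ℕ) : nuM M t ≤ t ^ p * M p / p ! :=
  ciInf_le ⟨0, by rintro _ ⟨q, rfl⟩; have := hpos q; positivity⟩ p

theorem nuM_nonneg (hpos : ∀ p, 0 < M p) (ht : 0 ≤ t) : 0 ≤ nuM M t :=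
  le_ciInf fun q => by have := hpos q; positivity

theorem nuM_le_one (hpos : ∀ p, 0 < M p) (h0 : M 0 = 1) (ht : 0 ≤ t) : nuM M t ≤ 1 := by
  simpa [h0] using nuM_le hpos ht 0

theorem nuM_pow_le (hpos : ∀ p, 0 < M p) (h0 : M 0 = 1) (h1 : 1 ≤ M 1) (ht : 0 ≤ t)
    {K p s : ℕ} (hs : s < K) :
    nuM M t ^ (2 * K - 1) ≤ t ^ (K * p + s) * (M p / p !) ^ K * M 1 ^ K := by
  have hν := nuM_nonneg hpos ht
  have hp := hpos p
  calc nuM M t ^ (2 * K - 1) ≤ nuM M t ^ K * nuM M t ^ s := by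
        rw [← pow_add]
        exact pow_le_pow_of_le_one hν (nuM_le_one hpos h0 ht) (by omega)
    _ ≤ (t ^ p * M p / p !) ^ K * (t * M 1) ^ s := by
        gcongr
        · exact nuM_le hpos ht p
        · simpa using nuM_le hpos ht 1
    _ = t ^ (K * p + s) * (M p / p !) ^ K * M 1 ^ s := by ring
    _ ≤ t ^ (K * p + s) * (M p / p !) ^ K * M 1 ^ K := by gcongr

end NuM

/-- If the weight sequence `M` satisfies `(M.3)`, then for every `a > 0`
there are `C₀, C₁ > 0` with `ν_M(at)^{C₀} ≤ C₁ ν_M(t)` for all `t ≥ 0`. -/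
theorem nuM_rpow_le_nuM_of_condM3
    (M : ℕ → ℝ) (hM : IsWeightSeq M) (hM3 : CondM3 M) (a : ℝ) (ha : 0 < a) :
    ∃ C₀ C₁ : ℝ, 0 < C₀ ∧ 0 < C₁ ∧ ∀ t : ℝ, 0 ≤ t →
      nuM M (a * t) ^ C₀ ≤ C₁ * nuM M t := by
  obtain ⟨K, hK, D, hD, hgrowth⟩ := exists_pow_mul_pow_le_of_condM3 hM hM3 ha.le
  obtain ⟨hpos, h0, h1, -, -⟩ := hM
  refine ⟨(2 * K - 1 : ℕ), D * M 1 ^ K, by norm_cast; omega, by have := hpos 1; positivity,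
    fun t ht => ?_⟩
  rw [Real.rpow_natCast, nuM.eq_1 M t, Real.mul_iInf_of_nonneg (by have := hpos 1; positivity)]
  refine le_ciInf fun q => ?_
  obtain ⟨p, s, hs, rfl⟩ : ∃ p s, s < K ∧ q = K * p + s :=
    ⟨q / K, q % K, Nat.mod_lt q hK, (Nat.div_add_mod q K).symm⟩
  calc nuM M (a * t) ^ (2 * K - 1) ≤ (a * t) ^ (K * p + s) * (M p / p !) ^ K * M 1 ^ K :=
        nuM_pow_le hpos h0 h1 (by positivity) hs
    _ = t ^ (K * p + s) * M 1 ^ K * (a ^ (K * p + s) * (M p / p !) ^ K) := by ring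
    _ ≤ t ^ (K * p + s) * M 1 ^ K * (D * (M (K * p + s) / (K * p + s) !)) :=
        mul_le_mul_of_nonneg_left (hgrowth p s hs) (by have := hpos 1; positivity)
    _ = D * M 1 ^ K * (t ^ (K * p + s) * M (K * p + s) / (K * p + s) !) := by ring
end
end
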